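/- arXiv:1708.02825 — 2 statements merged into one kernel-verified Lean document; each statement's English description precedes it below -/
import Mathlib

section
/- Let p, q, r be three points in the Euclidean plane that are not collinear. If each of p, q, r is moved by a distance of at most d/81, where d is the minimum of the three distances from each point to the line through the other two, then the resulting three points are still not collinear. -/
noncomputable def lineThrough (p q : EuclideanSpace ℝ (Fin 2)) : Set (EuclideanSpace ℝ (Fin 2)) :=
  ↑(affineSpan ℝ ({p, q} : Set (EuclideanSpace ℝ (Fin 2))))

noncomputable def distToLine (r p q : EuclideanSpace ℝ (Fin 2)) : ℝ :=
  Metric.infDist r (lineThrough p q)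

/-!
The area form `ω` of an oriented Euclidean plane is bilinear, satisfies `|ω u v| ≤ ‖u‖ * ‖v‖`,
and `ω (q -ᵥ p) (r -ᵥ p)` vanishes exactly on collinear triples. Its absolute value `D` is base
times height, so `D ≥ d * dist q p` and `D ≥ d * dist r p`, where also `dist q p ≥ d`. Moving each
point by at most `δ` moves `q -ᵥ p` and `r -ᵥ p` by at most `2δ`, hence changes the area by at most
`2δ (dist q p + dist r p) + 4δ²`, which is less than `D` once `5δ ≤ d`. So the new area is nonzero.
-/

open Module Metric

namespace Orientation

variable {V P : Type*} [NormedAddCommGroup V] [InnerProductSpace ℝ V] [Fact (finrank ℝ V = 2)]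
  [MetricSpace P] [NormedAddTorsor V P] (o : Orientation ℝ V (Fin 2))

local notation "ω" => o.areaForm

theorem exists_mem_affineSpan_pair_dist_mul_dist_eq (p q r : P) :
    ∃ x ∈ line[ℝ, p, q], dist r x * dist q p = |ω (q -ᵥ p) (r -ᵥ p)| := by
  set u := q -ᵥ p
  set v := r -ᵥ p
  set t := inner ℝ u v / ‖u‖ ^ 2
  have horth : inner ℝ u (v - t • u) = 0 := by
    rcases eq_or_ne u 0 with hu | hu
    · simp [hu]
    · rw [inner_sub_right, inner_smul_right, real_inner_self_eq_norm_sq,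
        div_mul_cancel₀ _ (by positivity), sub_self]
  refine ⟨t • u +ᵥ p, ?_, ?_⟩
  · exact AffineMap.lineMap_mem_affineSpan_pair t p q
  · rw [dist_eq_norm_vsub V, dist_eq_norm_vsub V, vsub_vadd_eq_vsub_sub, mul_comm,
      ← o.abs_areaForm_of_orthogonal horth, map_sub, map_smul, o.areaForm_apply_self,
      smul_zero, sub_zero]

theorem areaForm_vsub_eq_zero_iff_collinear {p q r : P} :
    ω (q -ᵥ p) (r -ᵥ p) = 0 ↔ Collinear ℝ ({p, q, r} : Set P) := by
  constructor
  · intro h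
    rcases eq_or_ne q p with rfl | hqp
    · simp [collinear_pair]
    obtain ⟨x, hx, hdist⟩ := o.exists_mem_affineSpan_pair_dist_mul_dist_eq p q r
    rw [h, abs_zero, mul_eq_zero, dist_eq_zero, dist_eq_zero] at hdist
    rcases hdist with rfl | rfl
    · rw [Set.pair_comm, Set.insert_comm]
      exact collinear_insert_of_mem_affineSpan_pair hx
    · exact absurd rfl hqp
  · intro h
    obtain ⟨w, hw⟩ := (collinear_iff_of_mem (Set.mem_insert p _)).1 h
    obtain ⟨s, rfl⟩ := hw q (by simp)
    obtain ⟨t, rfl⟩ := hw r (by simp)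
    simp [o.areaForm_apply_self]

theorem infDist_mul_dist_le_abs_areaForm (p q r : P) :
    infDist r (line[ℝ, p, q] : Set P) * dist q p ≤ |ω (q -ᵥ p) (r -ᵥ p)| := by
  obtain ⟨x, hx, hdist⟩ := o.exists_mem_affineSpan_pair_dist_mul_dist_eq p q r
  exact hdist ▸ mul_le_mul_of_nonneg_right (infDist_le_dist_of_mem hx) dist_nonneg

theorem abs_areaForm_sub_areaForm_le (u v u' v' : V) :
    |ω u' v' - ω u v| ≤ ‖u‖ * dist v v' + dist u u' * ‖v‖ + dist u u' * dist v v' := by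
  have hexp : ω u' v' - ω u v = ω u (v' - v) + ω (u' - u) v + ω (u' - u) (v' - v) := by
    simp only [map_sub, LinearMap.sub_apply]
    ring
  rw [hexp, dist_comm u, dist_comm v, dist_eq_norm, dist_eq_norm]
  refine (abs_add_three _ _ _).trans (add_le_add_three ?_ ?_ ?_) <;> exact o.abs_areaForm_le _ _

end Orientation

section

variable {V P : Type*} [NormedAddCommGroup V] [InnerProductSpace ℝ V] [Fact (finrank ℝ V = 2)]
  [MetricSpace P] [NormedAddTorsor V P]

theorem not_collinear_of_dist_le {p q r p' q' r' : P} {d δ : ℝ}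
    (hcol : ¬ Collinear ℝ ({p, q, r} : Set P))
    (hr : d ≤ infDist r (line[ℝ, p, q] : Set P)) (hq : d ≤ infDist q (line[ℝ, p, r] : Set P))
    (hp' : dist p p' ≤ δ) (hq' : dist q q' ≤ δ) (hr' : dist r r' ≤ δ) (hδ : 5 * δ ≤ d) :
    ¬ Collinear ℝ ({p', q', r'} : Set P) := by
  intro hcol'
  have : FiniteDimensional ℝ V := .of_fact_finrank_eq_two
  set o : Orientation ℝ V (Fin 2) := (finBasisOfFinrankEq ℝ V Fact.out).orientation
  set D := |o.areaForm (q -ᵥ p) (r -ᵥ p)|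
  have hD : 0 < D := abs_pos.2 (mt o.areaForm_vsub_eq_zero_iff_collinear.1 hcol)
  have hDq : d * dist q p ≤ D :=
    (mul_le_mul_of_nonneg_right hr dist_nonneg).trans (o.infDist_mul_dist_le_abs_areaForm p q r)
  have hDr : d * dist r p ≤ D := by
    have := (mul_le_mul_of_nonneg_right hq dist_nonneg).trans
      (o.infDist_mul_dist_le_abs_areaForm p r q)
    rwa [o.areaForm_swap, abs_neg] at this
  have hdq : d ≤ dist q p := hq.trans (infDist_le_dist_of_mem (left_mem_affineSpan_pair ℝ p r))
  have hu : dist (q -ᵥ p) (q' -ᵥ p') ≤ 2 * δ := (dist_vsub_vsub_le _ _ _ _).trans (by linarith)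
  have hv : dist (r -ᵥ p) (r' -ᵥ p') ≤ 2 * δ := (dist_vsub_vsub_le _ _ _ _).trans (by linarith)
  have hpert := o.abs_areaForm_sub_areaForm_le (q -ᵥ p) (r -ᵥ p) (q' -ᵥ p') (r' -ᵥ p')
  rw [o.areaForm_vsub_eq_zero_iff_collinear.2 hcol', zero_sub, abs_neg,
    ← dist_eq_norm_vsub, ← dist_eq_norm_vsub] at hpert
  have hδ0 : 0 ≤ δ := dist_nonneg.trans hp'
  have hDle : D ≤ dist q p * (2 * δ) + 2 * δ * dist r p + 2 * δ * (2 * δ) :=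
    hpert.trans (by gcongr)
  -- `5δ ≤ d` turns this into `D ≤ (2/5 + 2/5 + 4/25) D`.
  nlinarith [mul_le_mul_of_nonneg_right hδ (dist_nonneg (x := q) (y := p)),
    mul_le_mul_of_nonneg_right hδ (dist_nonneg (x := r) (y := p)),
    mul_le_mul_of_nonneg_left hδ hδ0, mul_le_mul_of_nonneg_left hdq hδ0]

end

theorem stmt0 (p q r p' q' r' : EuclideanSpace ℝ (Fin 2))
    (hcol : ¬ Collinear ℝ ({p, q, r} : Set (EuclideanSpace ℝ (Fin 2))))
    (d : ℝ)
    (hd : d = min (min (distToLine p q r) (distToLine q p r)) (distToLine r p q))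
    (hp : dist p p' ≤ d / 81) (hq : dist q q' ≤ d / 81) (hr : dist r r' ≤ d / 81) :
    ¬ Collinear ℝ ({p', q', r'} : Set (EuclideanSpace ℝ (Fin 2))) := by
  have : Fact (finrank ℝ (EuclideanSpace ℝ (Fin 2)) = 2) := ⟨finrank_euclideanSpace_fin⟩
  have hdr : d ≤ distToLine r p q := hd ▸ min_le_right _ _
  have hdq : d ≤ distToLine q p r := hd ▸ (min_le_left _ _).trans (min_le_right _ _)
  exact not_collinear_of_dist_le hcol hdr hdq hp hq hr (by linarith [dist_nonneg.trans hp])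
end

section
/- Let a, b, c be three non-collinear points in ℝ² with all three pairwise distances at least D and all three point-to-opposite-line distances at least d. Set σ = min(d, D)/81. If each point moves by distance at most σ, the perpendicular distance from each new point to the line through the other two new points is still at least (1 − 3/81)·d... in particular positive. -/
/-!
Let `f = b + s • (c - b)` be the foot of the altitude from `a`, and `x = a - f`. The point
`y = b' + s • (c' - b') + x` is within `σ * (1 + |s| + |1 - s|)` of `a'`, and since the line
`b'c'` is almost parallel to `bc`, the distance from `y` to it is at least `(80 / 81) * ‖x‖`.
Twice the area of the triangle is `|bc| h_a = |ab| h_c = |ac| h_b`; as `|s| |bc| ≤ |ab|` and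
`|1 - s| |bc| ≤ |ac|`, the other two altitudes bound the spread: `d * (1 + |s| + |1 - s|) ≤ 2 h_a`.
With `81 σ ≤ d` the distance from `a'` to `b'c'` is therefore at least `(80 / 81 - 2 / 81) h_a`.
-/

open Metric RealInnerProductSpace AffineMap EuclideanGeometry

lemma mul_one_add_abs_add_abs_one_sub_le {d h s : ℝ} (hd : d ≤ h) (hs : d * |s| ≤ h)
    (hs1 : d * |1 - s| ≤ h) : d * (1 + |s| + |1 - s|) ≤ 2 * h := by
  rcases abs_cases s with ⟨hs', _⟩ | ⟨hs', _⟩ <;>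
    rcases abs_cases (1 - s) with ⟨hs1', _⟩ | ⟨hs1', _⟩ <;>
    rw [hs'] at hs ⊢ <;> rw [hs1'] at hs1 ⊢ <;> linarith

section InnerProductSpace

variable {V : Type*} [NormedAddCommGroup V] [InnerProductSpace ℝ V]

def gramDet (u v : V) : ℝ := ‖u‖ ^ 2 * ‖v‖ ^ 2 - ⟪u, v⟫ ^ 2

lemma gramDet_comm (u v : V) : gramDet u v = gramDet v u := by
  rw [gramDet, gramDet, real_inner_comm]; ring

lemma gramDet_neg_left (u v : V) : gramDet (-u) v = gramDet u v := by
  rw [gramDet, gramDet, norm_neg, inner_neg_left, neg_sq]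

lemma gramDet_add_smul_right (u v : V) (s : ℝ) : gramDet u (v + s • u) = gramDet u v := by
  rw [gramDet, gramDet, norm_add_sq_real, inner_add_right, inner_smul_right, inner_smul_right,
    norm_smul, Real.norm_eq_abs, mul_pow, sq_abs, real_inner_self_eq_norm_sq, real_inner_comm]
  ring

lemma norm_sq_mul_sub_le_gramDet {x u : V} (hx : ⟪x, u⟫ = 0) (u' : V) :
    ‖x‖ ^ 2 * (‖u'‖ ^ 2 - ‖u' - u‖ ^ 2) ≤ gramDet u' x := by
  have hinner : ⟪u', x⟫ = ⟪u' - u, x⟫ := by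
    rw [inner_sub_left, real_inner_comm x u, hx, sub_zero]
  have hcs : ⟪u' - u, x⟫ ^ 2 ≤ (‖u' - u‖ * ‖x‖) ^ 2 := by
    rw [← sq_abs]
    exact pow_le_pow_left₀ (abs_nonneg _) (abs_real_inner_le_norm _ _) 2
  rw [gramDet, hinner]
  nlinarith

lemma abs_mul_norm_le_norm_add_smul {x u : V} (hx : ⟪x, u⟫ = 0) (s : ℝ) :
    |s| * ‖u‖ ≤ ‖x + s • u‖ := by
  have hpyth := norm_add_sq_eq_norm_sq_add_norm_sq_real
    (show ⟪x, s • u⟫ = 0 by rw [inner_smul_right, hx, mul_zero])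
  rw [norm_smul, Real.norm_eq_abs] at hpyth
  exact (sq_le_sq₀ (by positivity) (norm_nonneg _)).1 (by nlinarith [sq_nonneg ‖x‖])

lemma exists_lineMap_infDist_eq (a b c : V) :
    ∃ s : ℝ, infDist a line[ℝ, b, c] = ‖a - lineMap b c s‖ ∧ ⟪a - lineMap b c s, c - b⟫ = 0 := by
  obtain ⟨s, hs⟩ := mem_affineSpan_pair_iff_exists_lineMap_eq.1
    (orthogonalProjection_mem (s := line[ℝ, b, c]) a)
  refine ⟨s, ?_, ?_⟩
  · rw [hs, ← dist_eq_norm, dist_orthogonalProjection_eq_infDist]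
  · have hcb : c - b ∈ line[ℝ, b, c].direction := by
      rw [direction_affineSpan]; exact vsub_rev_mem_vectorSpan_pair ℝ b c
    rw [hs, real_inner_comm]
    exact Submodule.inner_right_of_mem_orthogonal hcb
      (vsub_orthogonalProjection_mem_direction_orthogonal _ a)

lemma sq_norm_mul_infDist_line (p q r : V) :
    (‖q - p‖ * infDist r line[ℝ, p, q]) ^ 2 = gramDet (q - p) (r - p) := by
  obtain ⟨s, hdist, hperp⟩ := exists_lineMap_infDist_eq r p q
  have hr : r - p = (r - lineMap p q s) + s • (q - p) := by
    rw [lineMap_apply_module']; abel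
  rw [hr, gramDet_add_smul_right, gramDet, real_inner_comm, hperp, hdist]
  ring

lemma dist_mul_infDist_line_rotate (p q r : V) :
    dist p q * infDist r line[ℝ, p, q] = dist q r * infDist p line[ℝ, q, r] := by
  rw [← sq_eq_sq₀ (mul_nonneg dist_nonneg infDist_nonneg) (mul_nonneg dist_nonneg infDist_nonneg),
    dist_eq_norm', dist_eq_norm',
    sq_norm_mul_infDist_line, sq_norm_mul_infDist_line]
  have hqp : q - p = -(p - q) := (neg_sub p q).symm
  have hrp : r - p = (r - q) + (-1 : ℝ) • (p - q) := by rw [neg_one_smul]; abel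
  rw [hqp, hrp, gramDet_neg_left, gramDet_add_smul_right, gramDet_comm]

lemma dist_lineMap_lineMap_le (b c b' c' : V) (s : ℝ) :
    dist (lineMap b c s) (lineMap b' c' s) ≤ |1 - s| * dist b b' + |s| * dist c c' := by
  have hdiff : lineMap b c s - lineMap b' c' s = (1 - s) • (b - b') + s • (c - c') := by
    simp only [lineMap_apply_module, smul_sub]; abel
  rw [dist_eq_norm, hdiff, dist_eq_norm, dist_eq_norm]
  refine (norm_add_le _ _).trans ?_
  rw [norm_smul, norm_smul, Real.norm_eq_abs, Real.norm_eq_abs]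

lemma dist_lineMap_add_sub_lineMap_le {a b c a' b' c' : V} {σ : ℝ} (ha' : dist a a' ≤ σ)
    (hb' : dist b b' ≤ σ) (hc' : dist c c' ≤ σ) (s : ℝ) :
    dist a' (lineMap b' c' s + (a - lineMap b c s)) ≤ σ * (1 + |s| + |1 - s|) := by
  have hmove : dist a (lineMap b' c' s + (a - lineMap b c s)) =
      dist (lineMap b c s) (lineMap b' c' s) := by
    rw [dist_eq_norm, dist_eq_norm]; congr 1; abel
  calc dist a' (lineMap b' c' s + (a - lineMap b c s))
      ≤ dist a' a + dist a (lineMap b' c' s + (a - lineMap b c s)) := dist_triangle _ _ _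
    _ ≤ σ + (|1 - s| * σ + |s| * σ) := by
      rw [dist_comm, hmove]
      gcongr
      exact (dist_lineMap_lineMap_le b c b' c' s).trans (by gcongr)
    _ = σ * (1 + |s| + |1 - s|) := by ring

lemma mul_norm_le_infDist_lineMap_add {x b c b' c' : V} (hx : ⟪x, c - b⟫ = 0) (hb'c' : b' ≠ c')
    (h9 : 9 * ‖(c' - b') - (c - b)‖ ≤ ‖c' - b'‖) (s : ℝ) :
    80 / 81 * ‖x‖ ≤ infDist (lineMap b' c' s + x) line[ℝ, b', c'] := by
  set H := infDist (lineMap b' c' s + x) line[ℝ, b', c']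
  have ht' : 0 < ‖c' - b'‖ := norm_pos_iff.2 (sub_ne_zero.2 hb'c'.symm)
  have hgram : (‖c' - b'‖ * H) ^ 2 = gramDet (c' - b') x := by
    have hy : lineMap b' c' s + x - b' = x + s • (c' - b') := by
      rw [lineMap_apply_module']; abel
    rw [sq_norm_mul_infDist_line, hy, gramDet_add_smul_right]
  have hlow := norm_sq_mul_sub_le_gramDet hx (c' - b')
  have h81 : 81 * ‖(c' - b') - (c - b)‖ ^ 2 ≤ ‖c' - b'‖ ^ 2 := by
    nlinarith [norm_nonneg ((c' - b') - (c - b))]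
  have hsq : (‖c' - b'‖ * (80 / 81 * ‖x‖)) ^ 2 ≤ (‖c' - b'‖ * H) ^ 2 := by
    nlinarith [mul_nonneg (sq_nonneg ‖x‖) (sq_nonneg ‖c' - b'‖)]
  have := (sq_le_sq₀ (by positivity) (mul_nonneg ht'.le infDist_nonneg)).1 hsq
  exact le_of_mul_le_mul_left this ht'

lemma mul_abs_le_infDist_line {a b c : V} {d s : ℝ} (hbc : b ≠ c)
    (hperp : ⟪a - lineMap b c s, c - b⟫ = 0) (hc : d ≤ infDist c line[ℝ, a, b]) :
    d * |s| ≤ infDist a line[ℝ, b, c] := by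
  have ht : 0 < dist b c := dist_pos.2 hbc
  have hsb : |s| * dist b c ≤ dist a b := by
    have hab : a - b = (a - lineMap b c s) + s • (c - b) := by
      rw [lineMap_apply_module']; abel
    rw [dist_eq_norm', dist_eq_norm, hab]
    exact abs_mul_norm_le_norm_add_smul hperp s
  refine le_of_mul_le_mul_left ?_ ht
  calc dist b c * (d * |s|) = d * (|s| * dist b c) := by ring
    _ ≤ infDist c line[ℝ, a, b] * dist a b := mul_le_mul hc hsb (by positivity) infDist_nonneg
    _ = dist b c * infDist a line[ℝ, b, c] := by rw [mul_comm, dist_mul_infDist_line_rotate]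

theorem one_sub_mul_infDist_line_le_of_dist_le {a b c a' b' c' : V} {d σ : ℝ} (hσ : 0 < σ)
    (hσd : 81 * σ ≤ d) (hbc : 20 * σ ≤ dist b c) (ha : d ≤ infDist a line[ℝ, b, c])
    (hb : d ≤ infDist b line[ℝ, a, c]) (hc : d ≤ infDist c line[ℝ, a, b])
    (ha' : dist a a' ≤ σ) (hb' : dist b b' ≤ σ) (hc' : dist c c' ≤ σ) :
    (1 - 3 / 81) * infDist a line[ℝ, b, c] ≤ infDist a' line[ℝ, b', c'] := by
  set h := infDist a line[ℝ, b, c]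
  obtain ⟨s, hfoot, hperp⟩ := exists_lineMap_infDist_eq a b c
  set x := a - lineMap b c s
  have hb_ne_c : b ≠ c := dist_pos.1 (by linarith)
  have hs := mul_abs_le_infDist_line hb_ne_c hperp hc
  have hs1 : d * |1 - s| ≤ h := by
    have hperp' : ⟪a - lineMap c b (1 - s), b - c⟫ = 0 := by
      rw [lineMap_apply_one_sub, ← neg_sub c b, inner_neg_right, hperp, neg_zero]
    have hcb := mul_abs_le_infDist_line hb_ne_c.symm hperp' hb
    rw [Set.pair_comm] at hcb
    exact hcb
  have hmoves : 81 * (σ * (1 + |s| + |1 - s|)) ≤ 2 * h := by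
    refine le_trans ?_ (mul_one_add_abs_add_abs_one_sub_le ha hs hs1)
    rw [← mul_assoc]
    exact mul_le_mul_of_nonneg_right hσd (by positivity)
  have hδ : ‖(c' - b') - (c - b)‖ ≤ 2 * σ := by
    rw [← dist_eq_norm]
    linarith [dist_sub_sub_le c' b' c b, dist_comm c' c, dist_comm b' b]
  have ht' : 18 * σ ≤ dist b' c' := by
    have := dist_triangle4 b b' c' c
    rw [dist_comm c'] at this
    linarith
  have hrot := mul_norm_le_infDist_lineMap_add hperp
    (dist_pos.1 (by linarith)) (by rw [← dist_eq_norm' b' c']; linarith) s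
  rw [← hfoot] at hrot
  have hlip := infDist_le_infDist_add_dist (x := lineMap b' c' s + x) (y := a')
    (s := (line[ℝ, b', c'] : Set V))
  rw [dist_comm] at hlip
  linarith [dist_lineMap_add_sub_lineMap_le ha' hb' hc' s]

end InnerProductSpace

lemma distToLine_comm (r p q : EuclideanSpace ℝ (Fin 2)) :
    distToLine r p q = distToLine r q p := by
  rw [distToLine, distToLine, lineThrough, lineThrough, Set.pair_comm]

theorem stmt14_general (a b c a' b' c' : EuclideanSpace ℝ (Fin 2))
    (D d : ℝ) (hD : 0 < D) (hd : 0 < d)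
    (hab : D ≤ dist a b) (hbc : D ≤ dist b c) (hac : D ≤ dist a c)
    (hda : d ≤ distToLine a b c) (hdb : d ≤ distToLine b a c) (hdc : d ≤ distToLine c a b)
    (σ : ℝ) (hσ : σ = min d D / 81)
    (ha' : dist a a' ≤ σ) (hb' : dist b b' ≤ σ) (hc' : dist c c' ≤ σ) :
    (1 - 3 / 81) * d ≤ distToLine a' b' c' ∧
    (1 - 3 / 81) * d ≤ distToLine b' a' c' ∧
    (1 - 3 / 81) * d ≤ distToLine c' a' b' := by
  have hσ0 : 0 < σ := by rw [hσ]; positivity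
  have hσd : 81 * σ ≤ d := by rw [hσ]; linarith [min_le_left d D]
  have hσD : 81 * σ ≤ D := by rw [hσ]; linarith [min_le_right d D]
  refine ⟨?_, ?_, ?_⟩
  · exact (mul_le_mul_of_nonneg_left hda (by norm_num)).trans
      (one_sub_mul_infDist_line_le_of_dist_le hσ0 hσd (by linarith) hda hdb hdc ha' hb' hc')
  · rw [distToLine_comm] at hdc
    exact (mul_le_mul_of_nonneg_left hdb (by norm_num)).trans
      (one_sub_mul_infDist_line_le_of_dist_le hσ0 hσd (by linarith) hdb hda hdc hb' ha' hc')
  · rw [distToLine_comm] at hda hdb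
    exact (mul_le_mul_of_nonneg_left hdc (by norm_num)).trans
      (one_sub_mul_infDist_line_le_of_dist_le hσ0 hσd (by linarith) hdc hda hdb hc' ha' hb')

theorem stmt14 (a b c a' b' c' : EuclideanSpace ℝ (Fin 2))
    (hcol : ¬ Collinear ℝ ({a, b, c} : Set (EuclideanSpace ℝ (Fin 2))))
    (D d : ℝ) (hD : 0 < D) (hd : 0 < d)
    (hab : D ≤ dist a b) (hbc : D ≤ dist b c) (hac : D ≤ dist a c)
    (hda : d ≤ distToLine a b c) (hdb : d ≤ distToLine b a c) (hdc : d ≤ distToLine c a b)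
    (σ : ℝ) (hσ : σ = min d D / 81)
    (ha' : dist a a' ≤ σ) (hb' : dist b b' ≤ σ) (hc' : dist c c' ≤ σ) :
    (1 - 3 / 81) * d ≤ distToLine a' b' c' ∧
    (1 - 3 / 81) * d ≤ distToLine b' a' c' ∧
    (1 - 3 / 81) * d ≤ distToLine c' a' b' :=
  stmt14_general a b c a' b' c' D d hD hd hab hbc hac hda hdb hdc σ hσ ha' hb' hc'
end
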